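/- Let σ be a density matrix and {f_k}_{k=1}^m a POVM measurement, i.e., Σ_k f_k* f_k = Id. Then the componentwise sum of the decreasingly ordered spectra Σ_k Sp(f_k σ f_k*) majorizes Sp(σ). In other words, a generalized measurement whose results are recorded increases the spectrum in expectation in the majorization order. -/

import Mathlib

/-!
Fix `t` and let `B` be the part of `σ` on its `t` leading eigenvectors: `0 ≤ B ≤ σ`,
`rank B ≤ t`, and `tr B` is the sum of the `t` largest eigenvalues of `σ`. The measurement
preserves traces, `tr B = ∑ₖ tr (fₖ B fₖᴴ)`, and each `fₖ B fₖᴴ` has rank at most `t` and lies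
below the outcome `fₖ σ fₖᴴ`. So it suffices to know (Ky Fan) that a Hermitian `D ≤ C` of rank
at most `t` has trace at most the sum of the `t` largest eigenvalues of `C`: with `Q` the
projection onto the range of `D`, `tr D = tr (D Q) ≤ tr (C Q)`, and in an eigenbasis of `C`,
`tr (C Q) = ∑ λᵢ qᵢ` with `qᵢ ∈ [0, 1]` and `∑ qᵢ ≤ t`, which is at most `∑_{i < t} λᵢ`.
-/

open scoped ComplexOrder

open Matrix Finset in
/-- `u` rearranged in decreasing order. -/
noncomputable def sortDesc {n : ℕ} (u : Fin n → ℝ) : Fin n → ℝ :=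
  fun i => u (Tuple.sort u i.rev)

open Finset in
/-- `u` majorizes `v`: every partial sum of the decreasing rearrangement of `u`
dominates that of `v`, and the total sums agree. -/
noncomputable def Majorizes {n : ℕ} (u v : Fin n → ℝ) : Prop :=
  (∀ k : ℕ, ∑ i ∈ Finset.univ.filter (fun i : Fin n => (i : ℕ) < k), sortDesc v i ≤
      ∑ i ∈ Finset.univ.filter (fun i : Fin n => (i : ℕ) < k), sortDesc u i) ∧
  ∑ i, u i = ∑ i, v i

open Finset Matrix

theorem sum_mul_le_sum_of_threshold {ι : Type*} [Fintype ι] (s : Finset ι) {μ x : ι → ℝ}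
    {c : ℝ} (hc : 0 ≤ c) (hs : ∀ i ∈ s, c ≤ μ i) (hsc : ∀ i ∉ s, μ i ≤ c)
    (hx0 : ∀ i, 0 ≤ x i) (hx1 : ∀ i, x i ≤ 1) (hxs : ∑ i, x i ≤ #s) :
    ∑ i, μ i * x i ≤ ∑ i ∈ s, μ i := by
  classical
  -- `μ i - c` and `𝟙ₛ i - x i` have the same sign
  have hsign : ∀ i, c * ((if i ∈ s then 1 else 0) - x i) ≤
      μ i * ((if i ∈ s then 1 else 0) - x i) := by
    intro i
    by_cases hi : i ∈ s
    · simp only [hi, if_true]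
      exact mul_le_mul_of_nonneg_right (hs i hi) (by linarith [hx1 i])
    · simp only [hi, if_false]
      exact mul_le_mul_of_nonpos_right (hsc i hi) (by linarith [hx0 i])
  have hsum := sum_le_sum fun i (_ : i ∈ univ) => hsign i
  simp only [mul_sub, sum_sub_distrib, mul_ite, mul_one, mul_zero, sum_ite_mem, univ_inter,
    ← mul_sum, sum_const, nsmul_eq_mul] at hsum
  linarith [mul_nonneg hc (sub_nonneg.2 hxs)]

section Rearrangement

variable {n : ℕ}

noncomputable def sumLargest (k : ℕ) (u : Fin n → ℝ) : ℝ :=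
  ∑ i ∈ univ.filter (fun i : Fin n => (i : ℕ) < k), sortDesc u i

theorem majorizes_iff {u v : Fin n → ℝ} :
    Majorizes u v ↔ (∀ k, sumLargest k v ≤ sumLargest k u) ∧ ∑ i, u i = ∑ i, v i :=
  Iff.rfl

theorem sortDesc_eq_comp (u : Fin n → ℝ) :
    sortDesc u = u ∘ (Fin.revPerm.trans (Tuple.sort u)) :=
  rfl

theorem sum_sortDesc (u : Fin n → ℝ) : ∑ i, sortDesc u i = ∑ i, u i := by
  rw [sortDesc_eq_comp]
  exact Equiv.sum_comp _ u

theorem antitone_sortDesc (u : Fin n → ℝ) : Antitone (sortDesc u) :=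
  fun _ _ hij => Tuple.monotone_sort u (Fin.rev_le_rev.2 hij)

theorem sortDesc_eq_self_of_antitone {u : Fin n → ℝ} (hu : Antitone u) : sortDesc u = u := by
  have h := (Tuple.comp_sort_eq_comp_iff_monotone (f := u) (σ := Fin.revPerm)).2
    fun i j hij => hu (Fin.rev_le_rev.2 hij)
  funext i
  simpa [sortDesc] using (congrFun h i.rev).symm

theorem sumLargest_sum_sortDesc {ι : Type*} [Fintype ι] (v : ι → Fin n → ℝ) (k : ℕ) :
    sumLargest k (fun i => ∑ j, sortDesc (v j) i) = ∑ j, sumLargest k (v j) := by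
  have hanti : Antitone fun i => ∑ j, sortDesc (v j) i :=
    fun _ _ hab => sum_le_sum fun j _ => antitone_sortDesc (v j) hab
  rw [sumLargest, sortDesc_eq_self_of_antitone hanti, sum_comm]
  rfl

theorem sum_mul_le_sumLargest {μ x : Fin n → ℝ} (hμ : ∀ i, 0 ≤ μ i) (hx0 : ∀ i, 0 ≤ x i)
    (hx1 : ∀ i, x i ≤ 1) {t : ℕ} (hxs : ∑ i, x i ≤ t) :
    ∑ i, μ i * x i ≤ sumLargest t μ := by
  set p := Fin.revPerm.trans (Tuple.sort μ)
  rw [← Equiv.sum_comp p x] at hxs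
  rw [← Equiv.sum_comp p]
  have hcard : #{i : Fin n | (i : ℕ) < t} = min n t := Fin.card_filter_val_lt
  by_cases ht : t < n
  · refine sum_mul_le_sum_of_threshold (μ := sortDesc μ) (c := sortDesc μ ⟨t, ht⟩) _ (hμ _)
      (fun i hi => antitone_sortDesc μ ?_) (fun i hi => antitone_sortDesc μ ?_)
      (fun i => hx0 _) (fun i => hx1 _) ?_
    · simp only [mem_filter, mem_univ, true_and] at hi
      exact Fin.mk_le_of_le_val hi.le
    · simp only [mem_filter, mem_univ, true_and, not_lt] at hi
      exact Fin.le_def.2 hi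
    · rwa [hcard, min_eq_right ht.le]
  · refine sum_mul_le_sum_of_threshold (μ := sortDesc μ) _ le_rfl (fun i _ => hμ _)
      (fun i hi => ?_) (fun i => hx0 _) (fun i => hx1 _) ?_
    · simp only [mem_filter, mem_univ, true_and] at hi
      omega
    · rw [hcard, min_eq_left (not_lt.1 ht)]
      simpa using sum_le_sum fun i (_ : i ∈ univ) => hx1 (p i)

theorem exists_le_card_support_le_sum_eq_sumLargest {v : Fin n → ℝ} (hv : 0 ≤ v)
    (t : ℕ) : ∃ w : Fin n → ℝ, 0 ≤ w ∧ w ≤ v ∧ #{i | w i ≠ 0} ≤ t ∧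
      ∑ i, w i = sumLargest t v := by
  set p := Fin.revPerm.trans (Tuple.sort v)
  refine ⟨fun j => if ((p.symm j : Fin n) : ℕ) < t then v j else 0, fun j => ?_, fun j => ?_,
    ?_, ?_⟩
  · dsimp only
    split_ifs
    exacts [hv j, le_rfl]
  · dsimp only
    split_ifs
    exacts [le_rfl, hv j]
  · calc #{j | (if ((p.symm j : Fin n) : ℕ) < t then v j else 0) ≠ 0}
        ≤ #{j | ((p.symm j : Fin n) : ℕ) < t} :=
          card_le_card fun j => by
            simpa only [mem_filter, mem_univ, true_and] using
              fun hj => by_contra fun h => hj (if_neg h)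
      _ = #{i : Fin n | (i : ℕ) < t} := card_equiv p.symm (by simp)
      _ ≤ t := Fin.card_filter_val_lt.trans_le (min_le_right _ _)
  · rw [← Equiv.sum_comp p, sumLargest, sum_filter]
    simp only [Equiv.symm_apply_apply]
    rfl

end Rearrangement

section Spectral

open Unitary

variable {𝕜 n : Type*} [RCLike 𝕜] [Fintype n] [DecidableEq n]

theorem Matrix.trace_conjStarAlgAut (U : unitaryGroup n 𝕜) (A : Matrix n n 𝕜) :
    (conjStarAlgAut 𝕜 _ U A).trace = A.trace := by
  rw [conjStarAlgAut_apply, trace_mul_cycle, coe_star_mul_self, one_mul]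

theorem Matrix.PosSemidef.conjStarAlgAut {A : Matrix n n 𝕜} (hA : A.PosSemidef)
    (U : unitaryGroup n 𝕜) : (conjStarAlgAut 𝕜 _ U A).PosSemidef := by
  simpa [star_eq_conjTranspose] using hA.mul_mul_conjTranspose_same (U : Matrix n n 𝕜)

noncomputable def unitaryConjDiagonal (U : unitaryGroup n 𝕜) (w : n → ℝ) : Matrix n n 𝕜 :=
  conjStarAlgAut 𝕜 _ U (diagonal (RCLike.ofReal ∘ w))

theorem Matrix.IsHermitian.eq_unitaryConjDiagonal {A : Matrix n n 𝕜} (hA : A.IsHermitian) :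
    A = unitaryConjDiagonal hA.eigenvectorUnitary hA.eigenvalues :=
  hA.spectral_theorem

theorem unitaryConjDiagonal_mul (U : unitaryGroup n 𝕜) (w v : n → ℝ) :
    unitaryConjDiagonal U w * unitaryConjDiagonal U v = unitaryConjDiagonal U (w * v) := by
  rw [unitaryConjDiagonal, unitaryConjDiagonal, unitaryConjDiagonal, ← map_mul,
    diagonal_mul_diagonal]
  simp [Function.comp_def]

theorem unitaryConjDiagonal_sub (U : unitaryGroup n 𝕜) (w v : n → ℝ) :
    unitaryConjDiagonal U w - unitaryConjDiagonal U v = unitaryConjDiagonal U (w - v) := by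
  rw [unitaryConjDiagonal, unitaryConjDiagonal, unitaryConjDiagonal, ← map_sub, diagonal_sub]
  simp [Function.comp_def]

theorem unitaryConjDiagonal_one (U : unitaryGroup n 𝕜) : unitaryConjDiagonal U 1 = 1 := by
  simp [unitaryConjDiagonal, Function.comp_def]

theorem trace_unitaryConjDiagonal (U : unitaryGroup n 𝕜) (w : n → ℝ) :
    (unitaryConjDiagonal U w).trace = ∑ i, (w i : 𝕜) := by
  rw [unitaryConjDiagonal, Matrix.trace_conjStarAlgAut, trace_diagonal]
  rfl

theorem posSemidef_unitaryConjDiagonal (U : unitaryGroup n 𝕜) {w : n → ℝ} (hw : 0 ≤ w) :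
    (unitaryConjDiagonal U w : Matrix n n 𝕜).PosSemidef :=
  (PosSemidef.diagonal fun i => by simpa using hw i).conjStarAlgAut U

theorem rank_unitaryConjDiagonal_le (U : unitaryGroup n 𝕜) (w : n → ℝ) :
    (unitaryConjDiagonal U w).rank ≤ #{i | w i ≠ 0} := by
  classical
  calc (unitaryConjDiagonal U w).rank ≤ (diagonal (RCLike.ofReal ∘ w : n → 𝕜)).rank :=
        (rank_mul_le_left _ _).trans (rank_mul_le_right _ _)
    _ = #{i | w i ≠ 0} := by simp [rank_diagonal, Fintype.card_subtype]

open scoped MatrixOrder in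
theorem Matrix.PosSemidef.trace_mul_nonneg {A B : Matrix n n 𝕜} (hA : A.PosSemidef)
    (hB : B.PosSemidef) : 0 ≤ (A * B).trace := by
  obtain ⟨S, rfl⟩ := CStarAlgebra.nonneg_iff_eq_star_mul_self.mp hB.nonneg
  rw [← mul_assoc, trace_mul_comm, ← mul_assoc, star_eq_conjTranspose]
  exact (hA.mul_mul_conjTranspose_same S).trace_nonneg

theorem Matrix.IsHermitian.exists_support_projection {D : Matrix n n 𝕜} (hD : D.IsHermitian) :
    ∃ Q : Matrix n n 𝕜, Q.PosSemidef ∧ (1 - Q).PosSemidef ∧ D * Q = D ∧ Q.trace = D.rank := by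
  classical
  set V := hD.eigenvectorUnitary
  set ind : n → ℝ := fun i => if hD.eigenvalues i = 0 then 0 else 1
  refine ⟨unitaryConjDiagonal V ind, posSemidef_unitaryConjDiagonal V fun i => ?_, ?_, ?_, ?_⟩
  · simp only [ind, Pi.zero_apply]
    split_ifs <;> norm_num
  · rw [← unitaryConjDiagonal_one V, unitaryConjDiagonal_sub]
    refine posSemidef_unitaryConjDiagonal V fun i => ?_
    simp only [ind, Pi.zero_apply, Pi.sub_apply, Pi.one_apply]
    split_ifs <;> norm_num
  · refine ((congrArg (· * _) hD.eq_unitaryConjDiagonal).trans ?_).trans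
      hD.eq_unitaryConjDiagonal.symm
    rw [unitaryConjDiagonal_mul]
    congr 1
    funext i
    simp only [ind, Pi.mul_apply]
    split_ifs with h <;> simp [h]
  · rw [trace_unitaryConjDiagonal, hD.rank_eq_card_non_zero_eigs, Fintype.card_subtype]
    simp [ind, apply_ite, sum_ite]

theorem Matrix.IsHermitian.sum_eigenvalues_eq_re_trace {A : Matrix n n ℂ}
    (hA : A.IsHermitian) : ∑ i, hA.eigenvalues i = A.trace.re := by
  simp [hA.trace_eq_sum_eigenvalues]

end Spectral

theorem Matrix.trace_eq_sum_trace_mul_mul_conjTranspose {ι R n : Type*} [Fintype ι] [Fintype n]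
    [DecidableEq n] [CommSemiring R] [StarRing R] {f : ι → Matrix n n R}
    (hf : ∑ k, (f k)ᴴ * f k = 1) (B : Matrix n n R) :
    B.trace = ∑ k, (f k * B * (f k)ᴴ).trace := by
  conv_lhs => rw [← mul_one B, ← hf, mul_sum, trace_sum]
  refine sum_congr rfl fun k _ => ?_
  rw [trace_mul_comm, trace_mul_cycle (f k)]

section KyFan

variable {n : ℕ}

theorem Matrix.PosSemidef.re_trace_mul_le_sumLargest {C X : Matrix (Fin n) (Fin n) ℂ}
    (hC : C.PosSemidef) (hX : X.PosSemidef) (hX1 : (1 - X).PosSemidef) {t : ℕ}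
    (hXt : X.trace.re ≤ t) : (C * X).trace.re ≤ sumLargest t hC.1.eigenvalues := by
  set U := hC.1.eigenvectorUnitary
  set M := (Unitary.conjStarAlgAut ℂ _ U).symm X
  have hM : M.PosSemidef := by
    simpa only [M, Unitary.conjStarAlgAut_symm] using hX.conjStarAlgAut (star U)
  have hM1 : (1 - M).PosSemidef := by
    simpa only [M, map_sub, map_one, Unitary.conjStarAlgAut_symm] using
      hX1.conjStarAlgAut (star U)
  have htrM : M.trace = X.trace := by
    simp only [M, Unitary.conjStarAlgAut_symm, Matrix.trace_conjStarAlgAut]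
  have htr : (C * X).trace = ∑ i, (hC.1.eigenvalues i : ℂ) * M i i := by
    have hCX : C * X = Unitary.conjStarAlgAut ℂ _ U
        (diagonal (RCLike.ofReal ∘ hC.1.eigenvalues) * M) := by
      rw [map_mul, StarAlgEquiv.apply_symm_apply]
      exact congrArg (· * X) hC.1.spectral_theorem
    rw [hCX, Matrix.trace_conjStarAlgAut, trace]
    simp [diagonal_mul]
  rw [htr, Complex.re_sum]
  simp only [Complex.re_ofReal_mul]
  refine sum_mul_le_sumLargest hC.eigenvalues_nonneg (fun i => ?_) (fun i => ?_) ?_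
  · exact (Complex.nonneg_iff.1 hM.diag_nonneg).1
  · have := (Complex.nonneg_iff.1 (hM1.diag_nonneg (i := i))).1
    simp only [sub_apply, one_apply_eq, Complex.sub_re, Complex.one_re] at this
    linarith
  · rwa [← htrM, trace, Complex.re_sum] at hXt

theorem Matrix.PosSemidef.re_trace_le_sumLargest_of_le {C D : Matrix (Fin n) (Fin n) ℂ}
    (hC : C.PosSemidef) (hD : D.IsHermitian) (hDC : (C - D).PosSemidef) {t : ℕ}
    (hrank : D.rank ≤ t) : D.trace.re ≤ sumLargest t hC.1.eigenvalues := by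
  obtain ⟨Q, hQ, hQ1, hDQ, hQtr⟩ := hD.exists_support_projection
  have hDC' : (D * Q).trace.re ≤ (C * Q).trace.re := by
    have := (Complex.nonneg_iff.1 (hDC.trace_mul_nonneg hQ)).1
    rw [sub_mul, trace_sub, Complex.sub_re] at this
    linarith
  calc D.trace.re = (D * Q).trace.re := by rw [hDQ]
    _ ≤ (C * Q).trace.re := hDC'
    _ ≤ sumLargest t hC.1.eigenvalues :=
      hC.re_trace_mul_le_sumLargest hQ hQ1 (by rw [hQtr]; exact_mod_cast hrank)

theorem Matrix.PosSemidef.exists_le_rank_le_trace_eq_sumLargest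
    {σ : Matrix (Fin n) (Fin n) ℂ} (hσ : σ.PosSemidef) (t : ℕ) :
    ∃ B : Matrix (Fin n) (Fin n) ℂ, B.PosSemidef ∧ (σ - B).PosSemidef ∧ B.rank ≤ t ∧
      B.trace.re = sumLargest t hσ.1.eigenvalues := by
  obtain ⟨w, hw0, hwv, hwt, hws⟩ :=
    exists_le_card_support_le_sum_eq_sumLargest (fun i => hσ.eigenvalues_nonneg i) t
  set U := hσ.1.eigenvectorUnitary
  refine ⟨unitaryConjDiagonal U w, posSemidef_unitaryConjDiagonal U hw0, ?_,
    (rank_unitaryConjDiagonal_le U w).trans hwt, ?_⟩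
  · rw [hσ.1.eq_unitaryConjDiagonal, unitaryConjDiagonal_sub]
    exact posSemidef_unitaryConjDiagonal U (sub_nonneg.2 hwv)
  · rw [trace_unitaryConjDiagonal, Complex.re_sum]
    simpa using hws

end KyFan

open Matrix in
theorem expected_spectrum_majorizes_general {n m : ℕ} (σ : Matrix (Fin n) (Fin n) ℂ)
    (hσ : σ.PosSemidef)
    (f : Fin m → Matrix (Fin n) (Fin n) ℂ)
    (hpovm : ∑ k, (f k)ᴴ * f k = 1) :
    Majorizes
      (fun i => ∑ k, sortDesc ((hσ.mul_mul_conjTranspose_same (f k)).1.eigenvalues) i)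
      (hσ.1.eigenvalues) := by
  refine majorizes_iff.2 ⟨fun t => ?_, ?_⟩
  · obtain ⟨B, hB, hσB, hrank, htr⟩ := hσ.exists_le_rank_le_trace_eq_sumLargest t
    rw [sumLargest_sum_sortDesc, ← htr, trace_eq_sum_trace_mul_mul_conjTranspose hpovm B,
      Complex.re_sum]
    refine sum_le_sum fun k _ => ?_
    refine (hσ.mul_mul_conjTranspose_same (f k)).re_trace_le_sumLargest_of_le
      (hB.mul_mul_conjTranspose_same (f k)).1 ?_ ?_
    · rw [← sub_mul, ← mul_sub]
      exact hσB.mul_mul_conjTranspose_same (f k)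
    · exact (rank_mul_le_left _ _).trans ((rank_mul_le_right _ _).trans hrank)
  · rw [sum_comm]
    simp only [sum_sortDesc, IsHermitian.sum_eigenvalues_eq_re_trace]
    rw [← Complex.re_sum, ← trace_eq_sum_trace_mul_mul_conjTranspose hpovm]

open Matrix in
/-- For a density matrix `σ` and a POVM measurement `{f k}` (`∑ k, (f k)ᴴ * f k = 1`),
the componentwise sum of the decreasingly ordered spectra of the outcomes
`f k * σ * (f k)ᴴ` majorizes the spectrum of `σ`. -/
theorem expected_spectrum_majorizes {n m : ℕ} (σ : Matrix (Fin n) (Fin n) ℂ)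
    (hσ : σ.PosSemidef) (hσtr : σ.trace = 1)
    (f : Fin m → Matrix (Fin n) (Fin n) ℂ)
    (hpovm : ∑ k, (f k)ᴴ * f k = 1) :
    Majorizes
      (fun i => ∑ k, sortDesc ((hσ.mul_mul_conjTranspose_same (f k)).1.eigenvalues) i)
      (hσ.1.eigenvalues) :=
  expected_spectrum_majorizes_general σ hσ f hpovm
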